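/- Let k be a positive integer. If G is a finite simple graph of order n with minimum degree at least k and with no induced subgraph isomorphic to the star K_{1,k+1}, then Ψ⁺_g(G) ≥ n/2 and Ψ⁻_g(G) ≥ n/2; equivalently, 2·Ψ⁺_g(G) ≥ n and 2·Ψ⁻_g(G) ≥ n. -/

import Mathlib

namespace EnclavelessGame

variable {V : Type*} [Fintype V] [DecidableEq V]

/-- `v` is an enclave of `S` if `v ∈ S` and its closed neighborhood `N[v]` is contained in `S`. -/
def IsEnclave (G : SimpleGraph V) (S : Finset V) (v : V) : Prop :=
  v ∈ S ∧ ∀ u, G.Adj v u → u ∈ S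

/-- `S` is enclaveless if it contains no enclave. -/
def IsEnclaveless (G : SimpleGraph V) (S : Finset V) : Prop :=
  ∀ v, ¬ IsEnclave G S v

instance (G : SimpleGraph V) [DecidableRel G.Adj] (S : Finset V) :
    Decidable (IsEnclaveless G S) := by
  unfold IsEnclaveless IsEnclave
  infer_instance

/-- `D` is a dominating set: every vertex lies in the closed neighborhood
of some vertex of `D`. -/
def IsDominating (G : SimpleGraph V) (D : Finset V) : Prop :=
  ∀ v, ∃ u ∈ D, u = v ∨ G.Adj u v

/-- `D` is a minimal dominating set (minimal with respect to set inclusion). -/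
def IsMinimalDominating (G : SimpleGraph V) (D : Finset V) : Prop :=
  IsDominating G D ∧ ∀ D' ⊆ D, IsDominating G D' → D' = D

/-- `S` is a maximal enclaveless set (maximal with respect to set inclusion). -/
def IsMaximalEnclaveless (G : SimpleGraph V) (S : Finset V) : Prop :=
  IsEnclaveless G S ∧ ∀ T, S ⊆ T → IsEnclaveless G T → T = S

/-- The domination number `γ(G)`: minimum cardinality of a dominating set. -/
noncomputable def domNum (G : SimpleGraph V) : ℕ :=
  sInf {k | ∃ D : Finset V, IsDominating G D ∧ D.card = k}

/-- The upper domination number `Γ(G)`: maximum cardinality of a minimal dominating set. -/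
noncomputable def upperDomNum (G : SimpleGraph V) : ℕ :=
  sSup {k | ∃ D : Finset V, IsMinimalDominating G D ∧ D.card = k}

/-- The enclaveless number `Ψ(G)`: maximum cardinality of an enclaveless set. -/
noncomputable def enclavelessNum (G : SimpleGraph V) : ℕ :=
  sSup {k | ∃ S : Finset V, IsEnclaveless G S ∧ S.card = k}

/-- The lower enclaveless number `ψ(G)`: minimum cardinality of a maximal enclaveless set. -/
noncomputable def lowerEnclavelessNum (G : SimpleGraph V) : ℕ :=
  sInf {k | ∃ S : Finset V, IsMaximalEnclaveless G S ∧ S.card = k}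

/-- The set of playable vertices given the set `S` of already chosen vertices:
vertices `v ∉ S` such that `S ∪ {v}` is enclaveless. -/
def playableSet (G : SimpleGraph V) [DecidableRel G.Adj] (S : Finset V) : Finset V :=
  Finset.univ.filter (fun v => v ∉ S ∧ IsEnclaveless G (insert v S))

/-- The value of the competition-enclaveless game from position `S`: `maxTurn = true`
means it is Maximizer's turn (this computes `MaxVal S`), and `maxTurn = false` means it
is Minimizer's turn (this computes `MinVal S`). If no vertex is playable the value is
`|S|`; otherwise it is the max (resp. min) over playable `v` of the value of
`S ∪ {v}` with the turn switched. -/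
def gameVal (G : SimpleGraph V) [DecidableRel G.Adj] (maxTurn : Bool) (S : Finset V) : ℕ :=
  if h : (playableSet G S).Nonempty then
    if maxTurn then
      (playableSet G S).attach.sup' (by simpa using h)
        (fun v => gameVal G false (insert v.1 S))
    else
      (playableSet G S).attach.inf' (by simpa using h)
        (fun v => gameVal G true (insert v.1 S))
  else S.card
termination_by Sᶜ.card
decreasing_by
  all_goals
    have hv := v.2
    simp only [playableSet, Finset.mem_filter] at hv
    rw [Finset.compl_insert]
    exact Finset.card_erase_lt_of_mem (Finset.mem_compl.mpr hv.2.1)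

/-- The Maximizer-start enclaveless game number `Ψ⁺_g(G) = MaxVal ∅`. -/
def maxStartGameNum (G : SimpleGraph V) [DecidableRel G.Adj] : ℕ := gameVal G true ∅

/-- The Minimizer-start enclaveless game number `Ψ⁻_g(G) = MinVal ∅`. -/
def minStartGameNum (G : SimpleGraph V) [DecidableRel G.Adj] : ℕ := gameVal G false ∅

/-!
However the game is played, it ends at a maximal enclaveless set `S`, so it suffices to inject
`Sᶜ` into `S`. By maximality, a vertex `v` outside `S` either has all its neighbours in `S`, or
has a private neighbour `w ∈ S`, one whose only neighbour outside `S` is `v`. The vertices of the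
first kind form an independent set `A`; each has at least `k` neighbours, while by star-freeness
no vertex is adjacent to more than `k` of them, so Hall's theorem matches `A` into `S` along
edges. Sending the remaining vertices to their private neighbours completes the injection.
-/

section

variable {α : Type*} {G : SimpleGraph α}

theorem IsEnclaveless.mono {S T : Finset α} (hS : IsEnclaveless G S) (hTS : T ⊆ S) :
    IsEnclaveless G T :=
  fun v ⟨hv, hN⟩ => hS v ⟨hTS hv, fun u hu => hTS (hN u hu)⟩

theorem isEnclaveless_empty : IsEnclaveless G (∅ : Finset α) :=
  fun v hv => Finset.notMem_empty v hv.1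

theorem card_le_of_isIndepSet_of_forall_adj {k : ℕ}
    (hstar : ¬ ∃ (v : α) (T : Finset α), T.card = k + 1 ∧ (∀ u ∈ T, G.Adj v u) ∧
        ∀ a ∈ T, ∀ b ∈ T, a ≠ b → ¬ G.Adj a b)
    {u : α} {T : Finset α} (hT : G.IsIndepSet T) (hadj : ∀ x ∈ T, G.Adj u x) : T.card ≤ k := by
  by_contra! hcard
  obtain ⟨T', hT'T, hT'⟩ := Finset.exists_subset_card_eq (Nat.succ_le_of_lt hcard)
  exact hstar ⟨u, T', hT', fun x hx => hadj x (hT'T hx),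
    fun a ha b hb hab => hT (hT'T ha) (hT'T hb) hab⟩

variable [DecidableEq α]

theorem IsMaximalEnclaveless.forall_adj_mem_or_exists_private {S : Finset α}
    (hS : IsMaximalEnclaveless G S) {v : α} (hv : v ∉ S) :
    (∀ u, G.Adj v u → u ∈ S) ∨ ∃ w ∈ S, G.Adj v w ∧ ∀ u, G.Adj w u → u = v ∨ u ∈ S := by
  have hnot : ¬ IsEnclaveless G (insert v S) := fun h =>
    Finset.ne_insert_of_notMem _ _ hv (hS.2 _ (Finset.subset_insert v S) h).symm
  simp only [IsEnclaveless, IsEnclave, not_forall, not_not, Finset.mem_insert] at hnot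
  obtain ⟨w, rfl | hwS, hN⟩ := hnot
  · exact .inl fun u hu => (hN u hu).resolve_left (G.ne_of_adj hu).symm
  · obtain ⟨u, hwu, huS⟩ : ∃ u, G.Adj w u ∧ u ∉ S := by
      simpa [IsEnclave, hwS] using hS.1 w
    obtain rfl : u = v := (hN u hwu).resolve_right huS
    exact .inr ⟨w, hwS, hwu.symm, hN⟩

variable [Fintype α]

theorem isMaximalEnclaveless_of_playableSet_eq_empty [DecidableRel G.Adj] {S : Finset α}
    (hS : IsEnclaveless G S) (hplay : playableSet G S = ∅) : IsMaximalEnclaveless G S := by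
  refine ⟨hS, fun T hST hT => ?_⟩
  by_contra hne
  obtain ⟨v, hvT, hvS⟩ := Finset.exists_of_ssubset (hST.ssubset_of_ne (Ne.symm hne))
  have hv : v ∈ playableSet G S := by
    simp only [playableSet, Finset.mem_filter, Finset.mem_univ, true_and]
    exact ⟨hvS, hT.mono (Finset.insert_subset hvT hST)⟩
  simp [hplay] at hv

theorem exists_isMaximalEnclaveless_gameVal_eq [DecidableRel G.Adj] (maxTurn : Bool)
    (S : Finset α) (hS : IsEnclaveless G S) :
    ∃ T, IsMaximalEnclaveless G T ∧ gameVal G maxTurn S = T.card := by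
  rw [gameVal]
  split_ifs with hplay
  · obtain ⟨v, -, hv⟩ := Finset.exists_mem_eq_sup' hplay.attach
      (fun v : playableSet G S => gameVal G false (insert v.1 S))
    rw [hv]
    exact exists_isMaximalEnclaveless_gameVal_eq false _ (Finset.mem_filter.mp v.2).2.2
  · obtain ⟨v, -, hv⟩ := Finset.exists_mem_eq_inf' hplay.attach
      (fun v : playableSet G S => gameVal G true (insert v.1 S))
    rw [hv]
    exact exists_isMaximalEnclaveless_gameVal_eq true _ (Finset.mem_filter.mp v.2).2.2
  · exact ⟨S, isMaximalEnclaveless_of_playableSet_eq_empty hS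
      (Finset.not_nonempty_iff_eq_empty.mp hplay), rfl⟩
termination_by Sᶜ.card
decreasing_by
  all_goals
    rw [Finset.compl_insert]
    exact Finset.card_erase_lt_of_mem (Finset.mem_compl.mpr (Finset.mem_filter.mp v.2).2.1)

theorem exists_injective_adj_of_le_degree [DecidableRel G.Adj] {k : ℕ} (hk : 0 < k)
    (A : Finset α) (hdeg : ∀ a ∈ A, k ≤ G.degree a)
    (hA : ∀ u, (A.filter (G.Adj u)).card ≤ k) :
    ∃ g : A → α, Function.Injective g ∧ ∀ a, G.Adj a.1 (g a) := by
  refine (Fintype.all_card_le_filter_rel_iff_exists_injective fun (a : A) b => G.Adj a b).mp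
    fun s => Nat.le_of_mul_le_mul_right ?_ hk
  -- Hall's condition by double counting the edges between `s` and its neighbourhood.
  refine Finset.card_mul_le_card_mul (fun (a : A) b => G.Adj a b) (fun a ha => ?_) fun u _ => ?_
  · refine (hdeg a a.2).trans ((G.card_neighborFinset_eq_degree a).symm.trans_le
      (Finset.card_le_card fun b hb => ?_))
    rw [SimpleGraph.mem_neighborFinset] at hb
    simpa [Finset.bipartiteAbove, hb] using ⟨a, ⟨a.2, ha⟩, hb⟩
  · refine le_trans (Finset.card_le_card_of_injOn Subtype.val (fun a ha => ?_)
      Subtype.val_injective.injOn) (hA u)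
    simp only [Finset.coe_bipartiteBelow, Finset.mem_coe, Finset.mem_filter] at ha ⊢
    exact ⟨a.2, ha.2.symm⟩

theorem IsMaximalEnclaveless.card_compl_le_card [DecidableRel G.Adj] {k : ℕ} (hk : 0 < k)
    (hdeg : ∀ v : α, k ≤ G.degree v)
    (hind : ∀ (v : α) (T : Finset α), G.IsIndepSet T → (∀ u ∈ T, G.Adj v u) → T.card ≤ k)
    {S : Finset α} (hS : IsMaximalEnclaveless G S) : Sᶜ.card ≤ S.card := by
  set A := Sᶜ.filter fun v => ∀ u, G.Adj v u → u ∈ S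
  have hA_indep : G.IsIndepSet A := fun a ha b hb _ hab =>
    (Finset.mem_compl.mp (Finset.mem_filter.mp hb).1) ((Finset.mem_filter.mp ha).2 b hab)
  obtain ⟨g, hg_inj, hg_adj⟩ := exists_injective_adj_of_le_degree hk A (fun a _ => hdeg a)
    fun u => hind u _ (hA_indep.mono (Finset.coe_subset.mpr (Finset.filter_subset _ _)))
      fun a ha => (Finset.mem_filter.mp ha).2
  have hprivate : ∀ v ∈ Sᶜ, v ∉ A →
      ∃ w ∈ S, G.Adj v w ∧ ∀ u, G.Adj w u → u = v ∨ u ∈ S := fun v hv hvA =>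
    (hS.forall_adj_mem_or_exists_private (Finset.mem_compl.mp hv)).resolve_left
      fun h => hvA (Finset.mem_filter.mpr ⟨hv, h⟩)
  choose! p hp_mem hp_adj hp_private using hprivate
  let f v := if h : v ∈ A then g ⟨v, h⟩ else p v
  have hf_adj : ∀ v ∈ Sᶜ, G.Adj v (f v) := fun v hv => by
    by_cases h : v ∈ A
    · simpa [f, h] using hg_adj ⟨v, h⟩
    · simpa [f, h] using hp_adj v hv h
  have hf_mem : ∀ v ∈ Sᶜ, f v ∈ S := fun v hv => by
    by_cases h : v ∈ A
    · simpa [f, h] using (Finset.mem_filter.mp h).2 _ (hg_adj ⟨v, h⟩)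
    · simpa [f, h] using hp_mem v hv h
  have hf_private : ∀ a ∈ Sᶜ, ∀ b ∈ Sᶜ, b ∉ A → f a = f b → a = b := fun a ha b hb hbA hab =>
    ((hp_private b hb hbA a (by simpa [f, hbA, hab] using (hf_adj a ha).symm)).resolve_right
      (Finset.mem_compl.mp ha))
  refine Finset.card_le_card_of_injOn f hf_mem fun a ha b hb hab => ?_
  by_cases haA : a ∈ A
  · by_cases hbA : b ∈ A
    · simpa using hg_inj (by simpa [f, haA, hbA] using hab : g ⟨a, haA⟩ = g ⟨b, hbA⟩)
    · exact hf_private a ha b hb hbA hab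
  · exact (hf_private b hb a ha haA hab.symm).symm

end

/-- Let `k` be a positive integer. If `G` is a finite simple graph of order `n` with
minimum degree at least `k` and no induced `K_{1,k+1}` (no vertex has `k+1` pairwise
non-adjacent neighbors), then `Ψ⁺_g(G) ≥ n/2` and `Ψ⁻_g(G) ≥ n/2`, i.e.
`2·Ψ⁺_g(G) ≥ n` and `2·Ψ⁻_g(G) ≥ n`. -/
theorem starFree_gameNums_ge {V : Type*} [Fintype V] [DecidableEq V]
    (G : SimpleGraph V) [DecidableRel G.Adj] (k : ℕ) (hk : 1 ≤ k)
    (hdeg : ∀ v : V, k ≤ G.degree v)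
    (hstar : ¬ ∃ (v : V) (T : Finset V), T.card = k + 1 ∧ (∀ u ∈ T, G.Adj v u) ∧
        ∀ a ∈ T, ∀ b ∈ T, a ≠ b → ¬ G.Adj a b) :
    Fintype.card V ≤ 2 * maxStartGameNum G ∧ Fintype.card V ≤ 2 * minStartGameNum G := by
  have h (maxTurn : Bool) : Fintype.card V ≤ 2 * gameVal G maxTurn ∅ := by
    obtain ⟨S, hS, hval⟩ :=
      exists_isMaximalEnclaveless_gameVal_eq (G := G) maxTurn ∅ isEnclaveless_empty
    have := hS.card_compl_le_card hk hdeg fun _ _ => card_le_of_isIndepSet_of_forall_adj hstar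
    have := S.card_add_card_compl
    omega
  exact ⟨h true, h false⟩

end EnclavelessGame
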